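/- Let B ∈ B(H). Then w(B) ≥ ‖B‖/2 + (1/4)·| ‖B + B*‖ − ‖B − B*‖ |. -/

import Mathlib

/-!
Write `a = ‖B + B*‖` and `b = ‖B - B*‖`. The operators `B + B*` and `i (B - B*)` are self-adjoint,
so their norms are the suprema of `|⟨A x, x⟩|` over unit vectors, and both quadratic forms are
bounded by `|⟨B x, x⟩| + |⟨B* x, x⟩| = 2 |⟨B x, x⟩|`; hence `a, b ≤ 2 w(B)`. Since
`2 B = (B + B*) + (B - B*)`, also `2 ‖B‖ ≤ a + b`, and therefore
`‖B‖ / 2 + |a - b| / 4 ≤ (a + b) / 4 + |a - b| / 4 = max a b / 2 ≤ w(B)`.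
-/

open ContinuousLinearMap

variable {H : Type*} [NormedAddCommGroup H] [InnerProductSpace ℂ H] [CompleteSpace H]

/-- The numerical radius of a bounded linear operator:
`w(T) = sup { |⟨Tx, x⟩| : ‖x‖ = 1 }`. -/
noncomputable def numRadius {E : Type*} [NormedAddCommGroup E] [InnerProductSpace ℂ E]
    (T : E →L[ℂ] E) : ℝ :=
  sSup {r : ℝ | ∃ x : E, ‖x‖ = 1 ∧ r = ‖(inner ℂ (T x) x : ℂ)‖}

/-- The absolute value `|T| = (T*T)^(1/2)` of a bounded linear operator.
Note `opAbs (adjoint T) = (T T*)^(1/2) = |T*|`. -/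
noncomputable def opAbs (T : H →L[ℂ] H) : H →L[ℂ] H := CFC.sqrt (adjoint T * T)

/-- The off-diagonal operator matrix `[[0, B], [C, 0]]` acting on `H ⊕ H`
(with the Hilbert space structure `WithLp 2 (H × H)`) by `(x₁, x₂) ↦ (B x₂, C x₁)`. -/
noncomputable def offDiag (B C : H →L[ℂ] H) :
    WithLp 2 (H × H) →L[ℂ] WithLp 2 (H × H) :=
  ((WithLp.prodContinuousLinearEquiv 2 ℂ H H).symm : (H × H) →L[ℂ] WithLp 2 (H × H)).comp
    (((B.comp (ContinuousLinearMap.snd ℂ H H)).prod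
        (C.comp (ContinuousLinearMap.fst ℂ H H))).comp
      ((WithLp.prodContinuousLinearEquiv 2 ℂ H H) : WithLp 2 (H × H) →L[ℂ] H × H))

section NumRadius

variable {E : Type*} [NormedAddCommGroup E] [InnerProductSpace ℂ E]

lemma numRadius_nonneg (T : E →L[ℂ] E) : 0 ≤ numRadius T :=
  Real.sSup_nonneg fun _ ⟨_, _, hr⟩ ↦ hr ▸ norm_nonneg _

lemma norm_inner_self_le_numRadius (T : E →L[ℂ] E) {x : E} (hx : ‖x‖ = 1) :
    ‖inner ℂ (T x) x‖ ≤ numRadius T := by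
  refine le_csSup ⟨‖T‖, ?_⟩ ⟨x, hx, rfl⟩
  rintro _ ⟨y, hy, rfl⟩
  calc ‖inner ℂ (T y) y‖ ≤ ‖T y‖ * ‖y‖ := norm_inner_le_norm _ _
    _ ≤ ‖T‖ := by simpa [hy] using T.le_opNorm y

lemma norm_inner_self_le_numRadius_mul_sq (T : E →L[ℂ] E) (x : E) :
    ‖inner ℂ (T x) x‖ ≤ numRadius T * ‖x‖ ^ 2 := by
  rcases eq_or_ne x 0 with rfl | hx
  · simp
  set u : E := (‖x‖ : ℂ)⁻¹ • x
  have hu : ‖u‖ = 1 := by simp [u, norm_smul, hx]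
  calc ‖inner ℂ (T x) x‖ = ‖x‖ ^ 2 * ‖inner ℂ (T u) u‖ := by
        simp only [u, map_smul, inner_smul_left, inner_smul_right, norm_mul]
        simp [field]
    _ ≤ numRadius T * ‖x‖ ^ 2 := by
        rw [mul_comm]; gcongr; exact norm_inner_self_le_numRadius T hu

end NumRadius

lemma opNorm_le_of_isSymmetric_of_norm_inner_self_le {𝕜 E : Type*} [RCLike 𝕜]
    [NormedAddCommGroup E] [InnerProductSpace 𝕜 E] {A : E →L[𝕜] E}
    (hA : (A : E →ₗ[𝕜] E).IsSymmetric) {M : ℝ} (hM : 0 ≤ M)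
    (h : ∀ x, ‖inner 𝕜 (A x) x‖ ≤ M * ‖x‖ ^ 2) : ‖A‖ ≤ M := by
  rw [A.norm_eq_iSup_rayleighQuotient hA]
  refine ciSup_le fun x ↦ ?_
  rcases eq_or_ne x 0 with rfl | hx
  · simpa using hM
  rw [rayleighQuotient, reApplyInnerSelf_apply, abs_div, abs_sq,
    div_le_iff₀ (by positivity)]
  exact (RCLike.abs_re_le_norm _).trans (h x)

lemma two_mul_norm_le_norm_add_add_norm_sub {E : Type*} [SeminormedAddCommGroup E]
    [NormedSpace ℝ E] (x y : E) :
    2 * ‖x‖ ≤ ‖x + y‖ + ‖x - y‖ := by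
  calc 2 * ‖x‖ = ‖(x + y) + (x - y)‖ := by
        rw [add_add_sub_cancel, ← two_smul ℝ x, norm_smul, Real.norm_two]
    _ ≤ ‖x + y‖ + ‖x - y‖ := norm_add_le _ _

lemma norm_inner_adjoint_apply_self (T : H →L[ℂ] H) (x : H) :
    ‖inner ℂ (adjoint T x) x‖ = ‖inner ℂ (T x) x‖ := by
  rw [adjoint_inner_left, ← inner_conj_symm, RCLike.norm_conj]

lemma norm_inner_self_add_norm_inner_adjoint_self_le (B : H →L[ℂ] H) (x : H) :
    ‖inner ℂ (B x) x‖ + ‖inner ℂ (adjoint B x) x‖ ≤ 2 * numRadius B * ‖x‖ ^ 2 := by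
  rw [norm_inner_adjoint_apply_self]
  linarith [norm_inner_self_le_numRadius_mul_sq B x]

lemma norm_add_adjoint_le_two_mul_numRadius (B : H →L[ℂ] H) :
    ‖B + adjoint B‖ ≤ 2 * numRadius B := by
  have hB : IsSelfAdjoint (B + adjoint B) := by
    simpa only [star_eq_adjoint] using IsSelfAdjoint.add_star_self B
  refine opNorm_le_of_isSymmetric_of_norm_inner_self_le hB.isSymmetric
    (by linarith [numRadius_nonneg B]) fun x ↦ ?_
  calc ‖inner ℂ ((B + adjoint B) x) x‖
      ≤ ‖inner ℂ (B x) x‖ + ‖inner ℂ (adjoint B x) x‖ := by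
        rw [add_apply, inner_add_left]; exact norm_add_le _ _
    _ ≤ 2 * numRadius B * ‖x‖ ^ 2 := norm_inner_self_add_norm_inner_adjoint_self_le B x

lemma norm_sub_adjoint_le_two_mul_numRadius (B : H →L[ℂ] H) :
    ‖B - adjoint B‖ ≤ 2 * numRadius B := by
  have hB : IsSelfAdjoint (Complex.I • (B - adjoint B)) := by
    simp only [IsSelfAdjoint, star_smul, star_sub, star_eq_adjoint, adjoint_adjoint,
      Complex.star_def, Complex.conj_I, neg_smul, smul_sub, neg_sub_neg]
  have hI : ‖Complex.I • (B - adjoint B)‖ = ‖B - adjoint B‖ := by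
    rw [norm_smul, Complex.norm_I, one_mul]
  rw [← hI]
  refine opNorm_le_of_isSymmetric_of_norm_inner_self_le hB.isSymmetric
    (by linarith [numRadius_nonneg B]) fun x ↦ ?_
  calc ‖inner ℂ ((Complex.I • (B - adjoint B)) x) x‖
      = ‖inner ℂ (B x) x - inner ℂ (adjoint B x) x‖ := by
        rw [smul_apply, inner_smul_left, norm_mul, sub_apply, inner_sub_left]; simp
    _ ≤ ‖inner ℂ (B x) x‖ + ‖inner ℂ (adjoint B x) x‖ := norm_sub_le _ _
    _ ≤ 2 * numRadius B * ‖x‖ ^ 2 := norm_inner_self_add_norm_inner_adjoint_self_le B x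

theorem stmt_3 (B : H →L[ℂ] H) :
    ‖B‖ / 2 + (1 / 4) * |‖B + adjoint B‖ - ‖B - adjoint B‖| ≤ numRadius B := by
  have hre := norm_add_adjoint_le_two_mul_numRadius B
  have him := norm_sub_adjoint_le_two_mul_numRadius B
  have hB := two_mul_norm_le_norm_add_add_norm_sub B (adjoint B)
  rcases abs_cases (‖B + adjoint B‖ - ‖B - adjoint B‖) with ⟨h, -⟩ | ⟨h, -⟩ <;>
    rw [h] <;> linarith
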